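/- arXiv:2506.12249 — 2 statements merged into one kernel-verified Lean document; each statement's English description precedes it below -/
import Mathlib

section
/- Let R be a ring with unit 1, let N ≥ 1, and let e_1, …, e_N ∈ R be pairwise commuting idempotents; set g_l := 1 − e_l and, for 0 ≤ n ≤ N, P_n := Σ_{S ⊆ {1,…,N}, |S| = n} (Π_{l ∈ S} g_l) · (Π_{l ∉ S} e_l). Then for every 0 ≤ n ≤ N: Σ_{l=1}^{N} g_l · P_n = n • P_n (n-fold sum of P_n). -/
open Finset

/-- Product of a family of (pairwise commuting) elements over a finite index
set, taken in increasing order of the indices. -/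
def oprod {ι M : Type*} [LinearOrder ι] [Monoid M] (S : Finset ι) (f : ι → M) : M :=
  ((S.sort (· ≤ ·)).map f).prod

/-- The counting element
`P n = Σ_{S ⊆ {1,…,N}, |S| = n} (Π_{l ∈ S} (1 - e l)) · (Π_{l ∉ S} e l)`. -/
def badP {R : Type*} [Ring R] {N : ℕ} (e : Fin N → R) (n : ℕ) : R :=
  ∑ S ∈ powersetCard n (univ : Finset (Fin N)),
    oprod S (fun l => 1 - e l) * oprod Sᶜ e

lemma commute_oprod {ι M : Type*} [LinearOrder ι] [Monoid M] (S : Finset ι) (f : ι → M)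
    {a : M} (h : ∀ i ∈ S, Commute a (f i)) : Commute a (oprod S f) := by
  refine Commute.list_prod_right _ _ ?_
  intro x hx
  rcases List.mem_map.1 hx with ⟨i, hi, rfl⟩
  exact h i ((Finset.mem_sort _).1 hi)

lemma oprod_eq_mul_erase {ι M : Type*} [LinearOrder ι] [Monoid M] (S : Finset ι) (f : ι → M)
    (hf : ∀ i j, Commute (f i) (f j)) {l : ι} (hl : l ∈ S) :
    oprod S f = f l * oprod (S.erase l) f := by
  have hp : List.Perm (S.sort (· ≤ ·)) (l :: (S.erase l).sort (· ≤ ·)) := by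
    rw [← Multiset.coe_eq_coe]
    simp only [← Multiset.cons_coe, Finset.sort_eq, Finset.erase_val]
    exact (Multiset.cons_erase hl).symm
  have hpm := hp.map f
  have hpw : ((S.sort (· ≤ ·)).map f).Pairwise Commute := by
    apply List.pairwise_of_forall_mem_list
    intro a ha b hb
    rcases List.mem_map.1 ha with ⟨i, _, rfl⟩
    rcases List.mem_map.1 hb with ⟨j, _, rfl⟩
    exact hf i j
  have := hpm.prod_eq' hpw
  simpa [oprod] using this

/-- Number-operator identity: with `g_l := 1 - e_l`, for every `0 ≤ n ≤ N`,
`Σ_{l=1}^N g_l · P_n = n • P_n`. -/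
theorem sum_defect_mul_badP {R : Type*} [Ring R] {N : ℕ} (hN : 1 ≤ N)
    (e : Fin N → R) (hidem : ∀ l, e l * e l = e l)
    (hcomm : ∀ l m, Commute (e l) (e m)) (n : ℕ) (hn : n ≤ N) :
    ∑ l : Fin N, (1 - e l) * badP e n = n • badP e n := by
  have hge : ∀ i j : Fin N, Commute (1 - e i) (e j) := fun i j =>
    (Commute.one_left (e j)).sub_left (hcomm i j)
  have hgcomm : ∀ i j : Fin N, Commute (1 - e i) (1 - e j) := fun i j =>
    (Commute.one_right _).sub_right (hge i j)
  -- key term lemma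
  have key : ∀ S ∈ powersetCard n (univ : Finset (Fin N)), ∀ l : Fin N,
      (1 - e l) * (oprod S (fun m => 1 - e m) * oprod Sᶜ e) =
        if l ∈ S then oprod S (fun m => 1 - e m) * oprod Sᶜ e else 0 := by
    intro S _ l
    by_cases hl : l ∈ S
    · have hg2 : (1 - e l) * (1 - e l) = 1 - e l := by
        have hz : (1 - e l) * e l = 0 := by rw [sub_mul, one_mul, hidem, sub_self]
        rw [mul_sub, mul_one, hz, sub_zero]
      rw [if_pos hl, oprod_eq_mul_erase S _ hgcomm hl, ← mul_assoc, ← mul_assoc, hg2]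
    · rw [if_neg hl]
      have hlc : l ∈ Sᶜ := by simpa using hl
      rw [oprod_eq_mul_erase Sᶜ e hcomm hlc]
      have hc : Commute (1 - e l) (oprod S (fun m => 1 - e m)) :=
        commute_oprod _ _ fun i _ => hgcomm l i
      have hz : (1 - e l) * e l = 0 := by rw [sub_mul, one_mul, hidem, sub_self]
      rw [← mul_assoc, hc.eq, mul_assoc, ← mul_assoc (1 - e l), hz, zero_mul, mul_zero]
  calc ∑ l : Fin N, (1 - e l) * badP e n
      = ∑ l : Fin N, ∑ S ∈ powersetCard n (univ : Finset (Fin N)),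
          (1 - e l) * (oprod S (fun m => 1 - e m) * oprod Sᶜ e) := by
        simp [badP, Finset.mul_sum]
    _ = ∑ S ∈ powersetCard n (univ : Finset (Fin N)), ∑ l : Fin N,
          (1 - e l) * (oprod S (fun m => 1 - e m) * oprod Sᶜ e) := Finset.sum_comm
    _ = ∑ S ∈ powersetCard n (univ : Finset (Fin N)), ∑ l : Fin N,
          (if l ∈ S then oprod S (fun m => 1 - e m) * oprod Sᶜ e else 0) := by
        refine Finset.sum_congr rfl fun S hS => Finset.sum_congr rfl fun l _ => key S hS l
    _ = ∑ S ∈ powersetCard n (univ : Finset (Fin N)),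
          n • (oprod S (fun m => 1 - e m) * oprod Sᶜ e) := by
        refine Finset.sum_congr rfl fun S hS => ?_
        rw [Finset.sum_ite_mem, Finset.univ_inter, Finset.sum_const,
          (Finset.mem_powersetCard.1 hS).2]
    _ = n • badP e n := by rw [badP, Finset.smul_sum]
end

section
/- Let V be a finite-dimensional complex inner product space, let c ≥ 1 and N ≥ 1, and for each i ∈ {1,…,c} and l ∈ {1,…,N} let γ_{i,l} be an orthogonal projection on V (self-adjoint and idempotent), such that all the cN operators γ_{i,l} pairwise commute. Set g_{i,l} := 1 − γ_{i,l} and, for each i and 0 ≤ n ≤ N, P_{i,n} := Σ_{S ⊆ {1,…,N}, |S| = n} (Π_{l ∈ S} g_{i,l}) ∘ (Π_{l ∉ S} γ_{i,l}). Let ϖ : ℕ → ℝ be nonnegative and subadditive, i.e. ϖ(m+n) ≤ ϖ(m) + ϖ(n) for all m, n ∈ ℕ. Then for every vector Ψ ∈ V: ⟨Ψ, (Σ_{(n₁,…,n_c) ∈ {0,…,N}^c} ϖ(n₁ + ⋯ + n_c) • Π_{i=1}^{c} P_{i,n_i}) Ψ⟩ ≤ Σ_{i=1}^{c} ⟨Ψ,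 (Σ_{n=0}^{N} ϖ(n) • P_{i,n}) Ψ⟩, where both sides are real numbers (all the operators involved are self-adjoint and the products Π_i P_{i,n_i} are positive semidefinite). -/
/-!
All the operators involved lie in the subring generated by the `γ i l`, which is commutative and
consists of self-adjoint operators. There each `P i n` is a sum of mutually orthogonal minterms
`Π_{l ∈ S} (1 - γ i l) Π_{l ∉ S} γ i l`, hence idempotent, and `Σ_n P i n = 1`; so the products
`Q ν = Π_i P i (ν i)` are orthogonal projections and `μ ν = ⟨Ψ, Q ν Ψ⟩` is a nonnegative weight on
`ν ∈ {0,…,N}^c` whose `i`-th marginal is `n ↦ ⟨Ψ, P i n Ψ⟩`. The claim is then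
`E_μ[ϖ(Σ_i ν_i)] ≤ Σ_i E_μ[ϖ(ν_i)]`, which follows from subadditivity pointwise in `ν`.
-/

open Finset

theorem oprod_eq_prod {ι M : Type*} [LinearOrder ι] [CommMonoid M] (S : Finset ι) (f : ι → M) :
    oprod S f = ∏ l ∈ S, f l := by
  rw [oprod, prod_eq_multiset_prod, ← sort_eq S (· ≤ ·), Multiset.map_coe, Multiset.prod_coe]

theorem map_oprod {ι M M' F : Type*} [LinearOrder ι] [Monoid M] [Monoid M'] [FunLike F M M']
    [MonoidHomClass F M M'] (f : F) (S : Finset ι) (g : ι → M) :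
    f (oprod S g) = oprod S (fun l => f (g l)) := by
  simp [oprod, map_list_prod, List.map_map, Function.comp_def]

theorem map_badP {R S F : Type*} [Ring R] [Ring S] [FunLike F R S] [RingHomClass F R S] (f : F)
    {N : ℕ} (e : Fin N → R) (n : ℕ) : f (badP e n) = badP (fun l => f (e l)) n := by
  simp [badP, map_oprod]

theorem isIdempotentElem_prod {ι M : Type*} [CommMonoid M] {s : Finset ι} {f : ι → M}
    (hf : ∀ i ∈ s, IsIdempotentElem (f i)) : IsIdempotentElem (∏ i ∈ s, f i) :=
  prod_induction f IsIdempotentElem (fun _ _ => IsIdempotentElem.mul) .one hf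

section Minterm

variable {A ι : Type*} [CommRing A] [Fintype ι] [DecidableEq ι]

def minterm (e : ι → A) (S : Finset ι) : A :=
  (∏ l ∈ S, (1 - e l)) * ∏ l ∈ Sᶜ, e l

theorem sum_minterm (e : ι → A) : ∑ S, minterm e S = 1 := by
  simpa [minterm] using (Fintype.prod_add (fun l => 1 - e l) e).symm

theorem minterm_mul_minterm_eq_zero {e : ι → A} (he : ∀ l, IsIdempotentElem (e l))
    {S T : Finset ι} {l : ι} (hS : l ∈ S) (hT : l ∉ T) : minterm e S * minterm e T = 0 := by
  rw [minterm, minterm, ← mul_prod_erase S _ hS, ← mul_prod_erase Tᶜ _ (mem_compl.2 hT)]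
  linear_combination ((∏ k ∈ S.erase l, (1 - e k)) * (∏ k ∈ Sᶜ, e k) * (∏ k ∈ T, (1 - e k)) *
    ∏ k ∈ Tᶜ.erase l, e k) * (he l).one_sub_mul_self

theorem orthogonalIdempotents_minterm {e : ι → A} (he : ∀ l, IsIdempotentElem (e l)) :
    OrthogonalIdempotents (minterm e) where
  idem S := (isIdempotentElem_prod fun l _ => (he l).one_sub).mul
    (isIdempotentElem_prod fun l _ => he l)
  ortho S T hST := by
    obtain ⟨l, hlS, hlT⟩ | ⟨l, hlT, hlS⟩ : (∃ l ∈ S, l ∉ T) ∨ ∃ l ∈ T, l ∉ S := by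
      by_contra! h
      exact hST (Finset.ext fun l => ⟨h.1 l, h.2 l⟩)
    · exact minterm_mul_minterm_eq_zero he hlS hlT
    · rw [mul_comm]
      exact minterm_mul_minterm_eq_zero he hlT hlS

end Minterm

section BadP

variable {A : Type*} [CommRing A] {N : ℕ}

theorem badP_eq_sum_minterm (e : Fin N → A) (n : ℕ) :
    badP e n = ∑ S ∈ powersetCard n univ, minterm e S := by
  simp [badP, minterm, oprod_eq_prod]

theorem isIdempotentElem_badP {e : Fin N → A} (he : ∀ l, IsIdempotentElem (e l)) (n : ℕ) :
    IsIdempotentElem (badP e n) := by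
  rw [badP_eq_sum_minterm]
  exact (orthogonalIdempotents_minterm he).isIdempotentElem_sum

theorem sum_range_badP (e : Fin N → A) : ∑ n ∈ range (N + 1), badP e n = 1 := by
  have h := sum_powerset (univ : Finset (Fin N)) (minterm e)
  rw [card_univ, Fintype.card_fin, powerset_univ, sum_minterm] at h
  simp_rw [badP_eq_sum_minterm, ← h]

end BadP

theorem sum_filter_prod_of_sum_eq_one {A ι κ : Type*} [CommSemiring A] [Fintype ι]
    [DecidableEq ι] [Fintype κ] [DecidableEq κ] {P : ι → κ → A} (hP : ∀ j, ∑ k, P j k = 1)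
    (i : ι) (k : κ) : ∑ ν : ι → κ with ν i = k, ∏ j, P j (ν j) = P i k := by
  have hfiber : ({ν : ι → κ | ν i = k} : Finset _) =
      Fintype.piFinset fun j => if j = i then {k} else univ := by
    ext ν
    simp only [mem_filter, mem_univ, true_and, Fintype.mem_piFinset]
    refine ⟨fun h j => ?_, fun h => by simpa using h i⟩
    split_ifs with hj <;> simp [hj, h]
  have hfactor (j : ι) :
      ∑ k' ∈ (if j = i then {k} else univ), P j k' = if j = i then P i k else 1 := by
    split_ifs with hj
    · simp [hj]
    · exact hP j
  rw [hfiber, ← prod_univ_sum, prod_congr rfl fun j _ => hfactor j, prod_ite_eq' univ i]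
  simp

theorem sum_subadditive_mul_le_sum_marginal {ι κ M : Type*} [Fintype ι] [Nonempty ι]
    [DecidableEq ι] [Fintype κ] [DecidableEq κ] [AddCommMonoid M] {ϖ : M → ℝ}
    (hsub : ∀ x y, ϖ (x + y) ≤ ϖ x + ϖ y) (w : κ → M) {μ : (ι → κ) → ℝ} (hμ : ∀ ν, 0 ≤ μ ν) :
    ∑ ν, ϖ (∑ i, w (ν i)) * μ ν ≤ ∑ i, ∑ k, ϖ (w k) * ∑ ν : ι → κ with ν i = k, μ ν :=
  calc ∑ ν, ϖ (∑ i, w (ν i)) * μ ν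
      ≤ ∑ ν, (∑ i, ϖ (w (ν i))) * μ ν :=
        sum_le_sum fun ν _ => mul_le_mul_of_nonneg_right
          (le_sum_nonempty_of_subadditive ϖ hsub univ_nonempty _) (hμ ν)
    _ = ∑ i, ∑ ν, ϖ (w (ν i)) * μ ν := by simp_rw [sum_mul]; exact sum_comm
    _ = ∑ i, ∑ k, ϖ (w k) * ∑ ν : ι → κ with ν i = k, μ ν := by
        refine sum_congr rfl fun i _ => ?_
        rw [← sum_fiberwise univ (· i)]
        refine sum_congr rfl fun k _ => ?_
        rw [mul_sum]
        exact sum_congr rfl fun ν hν => by rw [(mem_filter.1 hν).2]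

theorem sum_subadditive_mul_map_prod_le {A ι κ M : Type*} [CommSemiring A] [Fintype ι]
    [Nonempty ι] [DecidableEq ι] [Fintype κ] [DecidableEq κ] [AddCommMonoid M] {φ : A →+ ℝ}
    (hφ : ∀ x, IsIdempotentElem x → 0 ≤ φ x) {P : ι → κ → A} (hP : ∀ i, ∑ k, P i k = 1)
    (hidem : ∀ i k, IsIdempotentElem (P i k)) {ϖ : M → ℝ} (hsub : ∀ x y, ϖ (x + y) ≤ ϖ x + ϖ y)
    (w : κ → M) :
    ∑ ν : ι → κ, ϖ (∑ i, w (ν i)) * φ (∏ i, P i (ν i)) ≤ ∑ i, ∑ k, ϖ (w k) * φ (P i k) := by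
  have hpos (ν : ι → κ) : 0 ≤ φ (∏ i, P i (ν i)) :=
    hφ _ (isIdempotentElem_prod fun i _ => hidem i (ν i))
  refine (sum_subadditive_mul_le_sum_marginal hsub w hpos).trans_eq ?_
  simp_rw [← map_sum, sum_filter_prod_of_sum_eq_one hP]

section Operators

variable {𝕜 E : Type*} [RCLike 𝕜] [NormedAddCommGroup E] [InnerProductSpace 𝕜 E]

open scoped IsMulCommutative in
theorem LinearMap.IsSymmetric.of_mem_closure {s : Set (E →ₗ[𝕜] E)}
    (hs : ∀ T ∈ s, T.IsSymmetric) (hcomm : ∀ S ∈ s, ∀ T ∈ s, S * T = T * S)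
    {T : E →ₗ[𝕜] E} (hT : T ∈ Subring.closure s) : T.IsSymmetric := by
  have := Subring.isMulCommutative_closure hcomm
  induction hT using Subring.closure_induction with
  | mem T hT => exact hs T hT
  | zero => exact .zero
  | one => exact .one
  | add S T _ _ hS hT => exact hS.add hT
  | neg T _ hT => simpa using IsSymmetric.zero.sub hT
  | mul S T hSmem hTmem hS hT =>
      exact hS.mul_of_commute hT
        (congrArg Subtype.val (mul_comm (⟨S, hSmem⟩ : Subring.closure s) ⟨T, hTmem⟩) :)

theorem re_inner_apply_nonneg_of_mem_closure {s : Set (E →ₗ[𝕜] E)}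
    (hs : ∀ T ∈ s, T.IsSymmetric) (hcomm : ∀ S ∈ s, ∀ T ∈ s, S * T = T * S)
    {T : E →ₗ[𝕜] E} (hT : T ∈ Subring.closure s) (hidem : IsIdempotentElem T) (x : E) :
    0 ≤ RCLike.re (inner 𝕜 x (T x)) :=
  LinearMap.IsSymmetricProjection.isPositive ⟨hidem, .of_mem_closure hs hcomm hT⟩
    |>.re_inner_nonneg_right x

end Operators

theorem re_inner_sum_ofReal_smul_apply {α V : Type*} [NormedAddCommGroup V]
    [InnerProductSpace ℂ V] (s : Finset α) (r : α → ℝ) (T : α → Module.End ℂ V) (Ψ : V) :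
    (inner ℂ Ψ ((∑ a ∈ s, (r a : ℂ) • T a) Ψ)).re = ∑ a ∈ s, r a * (inner ℂ Ψ (T a Ψ)).re := by
  simp only [LinearMap.sum_apply, LinearMap.smul_apply, inner_sum, inner_smul_right,
    Complex.re_sum, Complex.re_ofReal_mul]

theorem counting_lemma_subadditive_general
    {V : Type*} [NormedAddCommGroup V] [InnerProductSpace ℂ V]
    {c N : ℕ} (hc1 : 1 ≤ c)
    (γ : Fin c → Fin N → Module.End ℂ V)
    (hidem : ∀ i l, γ i l * γ i l = γ i l)
    (hsa : ∀ i l, LinearMap.IsSymmetric (γ i l))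
    (hcomm : ∀ i l i' l', Commute (γ i l) (γ i' l'))
    (ϖ : ℕ → ℝ)
    (hsub : ∀ m n, ϖ (m + n) ≤ ϖ m + ϖ n) (Ψ : V) :
    (inner ℂ Ψ
        ((∑ ν : Fin c → Fin (N + 1),
            (ϖ (∑ i, (ν i : ℕ)) : ℂ) •
              oprod Finset.univ (fun i => badP (γ i) (ν i))) Ψ) : ℂ).re
      ≤ ∑ i : Fin c,
          (inner ℂ Ψ
            ((∑ n ∈ Finset.range (N + 1), (ϖ n : ℂ) • badP (γ i) n) Ψ) : ℂ).re := by
  have : Nonempty (Fin c) := ⟨⟨0, hc1⟩⟩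
  set s := Set.range (Function.uncurry γ)
  have hs_sa : ∀ T ∈ s, T.IsSymmetric := by rintro _ ⟨⟨i, l⟩, rfl⟩; exact hsa i l
  have hs_comm : ∀ S ∈ s, ∀ T ∈ s, S * T = T * S := by
    rintro _ ⟨⟨i, l⟩, rfl⟩ _ ⟨⟨i', l'⟩, rfl⟩
    exact hcomm i l i' l'
  have := Subring.isMulCommutative_closure hs_comm
  open scoped IsMulCommutative in
  let B := Subring.closure s
  let e (i : Fin c) (l : Fin N) : B := ⟨γ i l, Subring.subset_closure ⟨(i, l), rfl⟩⟩
  have hcoe (i : Fin c) (n : ℕ) : ((badP (e i) n : B) : Module.End ℂ V) = badP (γ i) n :=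
    map_badP B.subtype (e i) n
  have hprod (ν : Fin c → Fin (N + 1)) : oprod univ (fun i => badP (γ i) (ν i)) =
      ((∏ i, badP (e i) (ν i) : B) : Module.End ℂ V) := by
    rw [← oprod_eq_prod, ← B.coe_subtype, map_oprod]
    simp only [B.coe_subtype, hcoe]
  let φ : B →+ ℝ := AddMonoidHom.mk' (fun T => (inner ℂ Ψ ((T : Module.End ℂ V) Ψ)).re)
    fun S T => by simp
  have key := sum_subadditive_mul_map_prod_le (φ := φ)
    (fun T hT => re_inner_apply_nonneg_of_mem_closure hs_sa hs_comm T.2 (hT.map B.subtype) Ψ)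
    (P := fun i (k : Fin (N + 1)) => badP (e i) k)
    (fun i => by rw [Fin.sum_univ_eq_sum_range (badP (e i)), sum_range_badP])
    (fun i k => isIdempotentElem_badP (fun l => Subtype.ext (hidem i l)) k) hsub Fin.val
  simp only [re_inner_sum_ofReal_smul_apply, hprod]
  simpa [φ, ← hcoe, ← Fin.sum_univ_eq_sum_range] using key

/-- **Counting lemma, first assertion** (Section 5.2 of the paper): for
pairwise commuting orthogonal projections `γ i l` (`i ∈ {1,…,c}`,
`l ∈ {1,…,N}`) on a finite-dimensional complex inner product space, class-wise
counting operators `P_{i,n}`, and a nonnegative subadditive weight `ϖ`,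
`⟨Ψ, (Σ_{n₁,…,n_c} ϖ(n₁+⋯+n_c) • Π_i P_{i,n_i}) Ψ⟩ ≤ Σ_i ⟨Ψ, (Σ_n ϖ(n) • P_{i,n}) Ψ⟩`
for every `Ψ`, both sides being real. -/
theorem counting_lemma_subadditive
    {V : Type*} [NormedAddCommGroup V] [InnerProductSpace ℂ V]
    [FiniteDimensional ℂ V] {c N : ℕ} (hc1 : 1 ≤ c) (hN : 1 ≤ N)
    (γ : Fin c → Fin N → Module.End ℂ V)
    (hidem : ∀ i l, γ i l * γ i l = γ i l)
    (hsa : ∀ i l, LinearMap.IsSymmetric (γ i l))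
    (hcomm : ∀ i l i' l', Commute (γ i l) (γ i' l'))
    (ϖ : ℕ → ℝ) (hnonneg : ∀ n, 0 ≤ ϖ n)
    (hsub : ∀ m n, ϖ (m + n) ≤ ϖ m + ϖ n) (Ψ : V) :
    (inner ℂ Ψ
        ((∑ ν : Fin c → Fin (N + 1),
            (ϖ (∑ i, (ν i : ℕ)) : ℂ) •
              oprod Finset.univ (fun i => badP (γ i) (ν i))) Ψ) : ℂ).re
      ≤ ∑ i : Fin c,
          (inner ℂ Ψ
            ((∑ n ∈ Finset.range (N + 1), (ϖ n : ℂ) • badP (γ i) n) Ψ) : ℂ).re :=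
  counting_lemma_subadditive_general hc1 γ hidem hsa hcomm ϖ hsub Ψ
end
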